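/- Let $u, \tilde u : [0,T] \to \{0,1\}$ be piecewise constant functions with the same initial value $u(0) = \tilde u(0)$ and the same number $N$ of switching times $\tau_1 < \dots < \tau_N$ and $\tilde\tau_1 < \dots < \tilde\tau_N$ respectively. Then $\|u - \tilde u\|_{L^1([0,T])} \le \sum_{i=1}^N |\tau_i - \tilde\tau_i| \le N \max_{1 \le i \le N} |\tau_i - \tilde\tau_i|$. -/

import Mathlib

open MeasureTheory

/-- The piecewise-constant `{0,1}`-valued function on `[0,T]` with initial
value `u0` and switching times `τ 1, …, τ N`: its value at `t` is `u0` if the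
number of switching times `≤ t` is even, `1 - u0` otherwise. -/
noncomputable def pcControl (u0 : ℝ) (N : ℕ) (τ : ℕ → ℝ) (t : ℝ) : ℝ :=
  if Even (((Finset.Icc 1 N).filter fun i => τ i ≤ t).card) then u0 else 1 - u0

/-! At time `t` the two controls can differ only if the numbers of switching times `≤ t`
have different parities, and then these numbers differ by at least one. Their difference is
at most the number of indices `i` with `t` between `τ i` and `τ' i`, and integrating this
count over `t` gives `∑ i, |τ i - τ' i|`. -/

open Set
open scoped symmDiff

noncomputable def switchCount (N : ℕ) (τ : ℕ → ℝ) (t : ℝ) : ℕ :=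
  ((Finset.Icc 1 N).filter fun i => τ i ≤ t).card

lemma pcControl_eq_ite_switchCount (u0 : ℝ) (N : ℕ) (τ : ℕ → ℝ) (t : ℝ) :
    pcControl u0 N τ t = if Even (switchCount N τ t) then u0 else 1 - u0 :=
  rfl

lemma switchCount_eq_sum_indicator (N : ℕ) (τ : ℕ → ℝ) (t : ℝ) :
    (switchCount N τ t : ℝ) = ∑ i ∈ Finset.Icc 1 N, (Ici (τ i)).indicator 1 t := by
  rw [switchCount, Finset.card_filter, Nat.cast_sum]
  refine Finset.sum_congr rfl fun i _ => ?_
  simp [indicator_apply]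

lemma pcControl_mem_Icc {u0 : ℝ} (hu0 : u0 ∈ Icc 0 1) (N : ℕ) (τ : ℕ → ℝ) (t : ℝ) :
    pcControl u0 N τ t ∈ Icc 0 1 := by
  obtain ⟨h0, h1⟩ := hu0
  unfold pcControl
  split_ifs <;> constructor <;> linarith

lemma abs_pcControl_sub_le_abs_switchCount_sub {u0 : ℝ} (hu0 : u0 ∈ Icc 0 1) (N : ℕ)
    (τ τ' : ℕ → ℝ) (t : ℝ) :
    |pcControl u0 N τ t - pcControl u0 N τ' t|
      ≤ |(switchCount N τ t : ℝ) - switchCount N τ' t| := by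
  by_cases hpar : Even (switchCount N τ t) ↔ Even (switchCount N τ' t)
  · simp only [pcControl_eq_ite_switchCount, hpar, sub_self, abs_zero]
    exact abs_nonneg _
  · have hcount : (1 : ℤ) ≤ |(switchCount N τ t : ℤ) - switchCount N τ' t| :=
      Int.one_le_abs fun h => hpar (by rw [Int.ofNat_inj.1 (sub_eq_zero.1 h)])
    obtain ⟨h0, h1⟩ := pcControl_mem_Icc hu0 N τ t
    obtain ⟨h0', h1'⟩ := pcControl_mem_Icc hu0 N τ' t
    calc |pcControl u0 N τ t - pcControl u0 N τ' t| ≤ 1 :=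
          abs_sub_le_of_nonneg_of_le h0 h1 h0' h1'
      _ ≤ _ := by exact_mod_cast hcount

lemma Ici_symmDiff_Ici {α : Type*} [LinearOrder α] (a b : α) :
    Ici a ∆ Ici b = Ico (min a b) (max a b) := by
  ext t
  simp only [mem_symmDiff, mem_Ici, mem_Ico, min_le_iff, lt_max_iff, not_le]
  grind

lemma volume_Ici_symmDiff_Ici (a b : ℝ) : volume (Ici a ∆ Ici b) = ENNReal.ofReal |a - b| := by
  rw [Ici_symmDiff_Ici, Real.volume_Ico, max_sub_min_eq_abs']

lemma abs_pcControl_sub_le_sum_indicator {u0 : ℝ} (hu0 : u0 ∈ Icc 0 1) (N : ℕ)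
    (τ τ' : ℕ → ℝ) (t : ℝ) :
    |pcControl u0 N τ t - pcControl u0 N τ' t|
      ≤ ∑ i ∈ Finset.Icc 1 N, (Ici (τ i) ∆ Ici (τ' i)).indicator 1 t := by
  calc |pcControl u0 N τ t - pcControl u0 N τ' t|
      ≤ |(switchCount N τ t : ℝ) - switchCount N τ' t| :=
        abs_pcControl_sub_le_abs_switchCount_sub hu0 N τ τ' t
    _ = |∑ i ∈ Finset.Icc 1 N, ((Ici (τ i)).indicator 1 t - (Ici (τ' i)).indicator 1 t)| := by
        rw [switchCount_eq_sum_indicator, switchCount_eq_sum_indicator, Finset.sum_sub_distrib]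
    _ ≤ ∑ i ∈ Finset.Icc 1 N, |(Ici (τ i)).indicator 1 t - (Ici (τ' i)).indicator 1 t| :=
        Finset.abs_sum_le_sum_abs _ _
    _ = ∑ i ∈ Finset.Icc 1 N, (Ici (τ i) ∆ Ici (τ' i)).indicator 1 t := by
        refine Finset.sum_congr rfl fun i _ => ?_
        rw [← abs_indicator_symmDiff _ _ (1 : ℝ → ℝ),
          abs_of_nonneg (indicator_nonneg (f := 1) (fun _ _ => zero_le_one) _)]

lemma setIntegral_abs_pcControl_sub_le {u0 : ℝ} (hu0 : u0 ∈ Icc 0 1) (s : Set ℝ) (N : ℕ)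
    (τ τ' : ℕ → ℝ) :
    ∫ t in s, |pcControl u0 N τ t - pcControl u0 N τ' t|
      ≤ ∑ i ∈ Finset.Icc 1 N, |τ i - τ' i| := by
  have hmeas (i : ℕ) : MeasurableSet (Ici (τ i) ∆ Ici (τ' i)) :=
    measurableSet_Ici.symmDiff measurableSet_Ici
  have hfin (i : ℕ) : volume (Ici (τ i) ∆ Ici (τ' i)) ≠ ⊤ := by
    rw [volume_Ici_symmDiff_Ici]
    exact ENNReal.ofReal_ne_top
  have hint (i : ℕ) :
      Integrable ((Ici (τ i) ∆ Ici (τ' i)).indicator (1 : ℝ → ℝ)) (volume.restrict s) :=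
    ((integrable_indicator_iff (hmeas i)).2 (integrableOn_const (hfin i))).restrict
  calc ∫ t in s, |pcControl u0 N τ t - pcControl u0 N τ' t|
      ≤ ∫ t in s, ∑ i ∈ Finset.Icc 1 N, (Ici (τ i) ∆ Ici (τ' i)).indicator 1 t :=
        integral_mono_of_nonneg (.of_forall fun _ => abs_nonneg _)
          (integrable_finsetSum _ fun i _ => hint i)
          (.of_forall (abs_pcControl_sub_le_sum_indicator hu0 N τ τ'))
    _ = ∑ i ∈ Finset.Icc 1 N, ∫ t in s, (Ici (τ i) ∆ Ici (τ' i)).indicator 1 t :=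
        integral_finsetSum _ fun i _ => hint i
    _ ≤ ∑ i ∈ Finset.Icc 1 N, |τ i - τ' i| := by
        refine Finset.sum_le_sum fun i _ => ?_
        rw [integral_indicator_one (hmeas i), measureReal_restrict_apply (hmeas i)]
        calc volume.real (Ici (τ i) ∆ Ici (τ' i) ∩ s)
            ≤ volume.real (Ici (τ i) ∆ Ici (τ' i)) := measureReal_mono inter_subset_left (hfin i)
          _ = |τ i - τ' i| := by
            rw [measureReal_def, volume_Ici_symmDiff_Ici, ENNReal.toReal_ofReal (abs_nonneg _)]

/-- two piecewise constant controls with the same initial value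
and the same number `N` of switching times differ in `L¹([0,T])` by at most
the sum of the distances between corresponding switching times, which is at
most `N` times the largest such distance. -/
theorem stmt2 (T : ℝ) (N : ℕ) (hN : 1 ≤ N) (u0 : ℝ)
    (hu0 : u0 = 0 ∨ u0 = 1) (τ τ' : ℕ → ℝ) :
    (∫ t in Set.Icc (0 : ℝ) T, |pcControl u0 N τ t - pcControl u0 N τ' t|)
        ≤ ∑ i ∈ Finset.Icc 1 N, |τ i - τ' i| ∧
    ∑ i ∈ Finset.Icc 1 N, |τ i - τ' i|
        ≤ (N : ℝ) * (Finset.Icc 1 N).sup' (by simp [hN] : (Finset.Icc 1 N).Nonempty)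
            (fun i => |τ i - τ' i|) := by
  have hu0' : u0 ∈ Icc (0 : ℝ) 1 := by rcases hu0 with rfl | rfl <;> simp
  refine ⟨setIntegral_abs_pcControl_sub_le hu0' _ N τ τ', ?_⟩
  calc ∑ i ∈ Finset.Icc 1 N, |τ i - τ' i|
      ≤ (Finset.Icc 1 N).card • (Finset.Icc 1 N).sup' _ (fun i => |τ i - τ' i|) :=
        Finset.sum_le_card_nsmul _ _ _ fun i hi => Finset.le_sup' (fun i => |τ i - τ' i|) hi
    _ = _ := by rw [Nat.card_Icc, Nat.add_sub_cancel, nsmul_eq_mul]
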